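/- The correctness probability function PA is not submodular: there exist K ≥ 2 and probabilities p₁,p₂,p₃ ∈ (0,1) with sets S = {l₁}, T = {l₁,l₂} such that PA(S ∪ {l₃}) - PA(S) < PA(T ∪ {l₃}) - PA(T). -/

import Mathlib

open Finset
open scoped Classical

/-- Probability that a model with success probability `p` predicts class `c`
when the ground truth is `q`: `p` if `c = q`, and `(1-p)/(K-1)` otherwise. -/
noncomputable def wgt (K : ℕ) (q : Fin K) (p : ℝ) (c : Fin K) : ℝ :=
  if c = q then p else (1 - p) / ((K : ℝ) - 1)

/-- Belief of class `d` under observation `φ` for models with success probabilities `p`. -/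
noncomputable def blf {n K : ℕ} (p : Fin n → ℝ) (φ : Fin n → Fin K) (d : Fin K) : ℝ :=
  ∏ i, if φ i = d then p i * ((K : ℝ) - 1) / (1 - p i) else 1

/-- Maximum-likelihood aggregation of observation `φ` yields the ground truth `q`:
`q` is predicted by some model and has strictly maximal belief among predicted classes. -/
def corr {n K : ℕ} (q : Fin K) (p : Fin n → ℝ) (φ : Fin n → Fin K) : Prop :=
  (∃ i, φ i = q) ∧ ∀ d : Fin K, (∃ i, φ i = d) → d ≠ q → blf p φ d < blf p φ q

/-- Correctness probability of the ensemble of `n` independent models. -/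
noncomputable def PA {n : ℕ} (K : ℕ) (q : Fin K) (p : Fin n → ℝ) : ℝ :=
  ∑ φ : Fin n → Fin K, (∏ i, wgt K q (p i) (φ i)) * (if corr q p φ then 1 else 0)

/-! The maximum-likelihood aggregate multiplies, class by class, the odds `p (K - 1) / (1 - p)`
of the models voting for it. A model weaker than `l₁` therefore never overrules `l₁`, so
`PA({l₁, l₃}) = PA({l₁}) = p₁` and `PA({l₁, l₂}) = p₁`. Two weaker models whose odds together
exceed those of `l₁` do overrule it when they agree: this costs when they agree on a wrong class
and gains when they agree on the truth against `l₁`, and for `K = 2`, `p₁ = 3/4`, `p₂ = p₃ = 2/3`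
the gain wins, `PA({l₁, l₂, l₃}) = p₁ + 1/36`. -/

noncomputable def odds (K : ℕ) (p : ℝ) : ℝ := p * ((K : ℝ) - 1) / (1 - p)

theorem sum_fin_succ_pi {α M : Type*} [Fintype α] [AddCommMonoid M] {n : ℕ}
    (f : (Fin (n + 1) → α) → M) : ∑ φ, f φ = ∑ a, ∑ ψ, f (Fin.cons a ψ) := by
  rw [← (Fin.consEquiv fun _ => α).sum_comp, Fintype.sum_prod_type]
  rfl

theorem sum_fin_three_pi {α M : Type*} [Fintype α] [AddCommMonoid M]
    (f : (Fin 3 → α) → M) : ∑ φ, f φ = ∑ a, ∑ b, ∑ c, f ![a, b, c] := by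
  simp only [sum_fin_succ_pi, Fintype.sum_unique]
  rfl

section

variable {K : ℕ} {q : Fin K}

theorem wgt_self (p : ℝ) : wgt K q p q = p := if_pos rfl

theorem wgt_of_ne {p : ℝ} {c : Fin K} (hc : c ≠ q) : wgt K q p c = (1 - p) / ((K : ℝ) - 1) :=
  if_neg hc

theorem sum_compl_singleton_const (q : Fin K) (a : ℝ) : ∑ _c ∈ {q}ᶜ, a = ((K : ℝ) - 1) * a := by
  rw [sum_const, card_compl, card_singleton, Fintype.card_fin, nsmul_eq_mul,
    Nat.cast_sub (Fin.pos q), Nat.cast_one]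

theorem sum_compl_wgt (hK : 1 < K) (p : ℝ) : ∑ c ∈ {q}ᶜ, wgt K q p c = 1 - p := by
  have hK' : (K : ℝ) - 1 ≠ 0 := sub_ne_zero.2 (by exact_mod_cast hK.ne')
  rw [sum_congr rfl fun c hc => wgt_of_ne (by simpa using hc), sum_compl_singleton_const]
  field_simp

theorem sum_wgt (hK : 1 < K) (p : ℝ) : ∑ c, wgt K q p c = 1 := by
  rw [Fintype.sum_eq_add_sum_compl q, wgt_self, sum_compl_wgt hK]
  ring

theorem sum_compl_wgt_mul_wgt (hK : 1 < K) (p p' : ℝ) :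
    ∑ c ∈ {q}ᶜ, wgt K q p c * wgt K q p' c = (1 - p) * (1 - p') / ((K : ℝ) - 1) := by
  have hK' : (K : ℝ) - 1 ≠ 0 := sub_ne_zero.2 (by exact_mod_cast hK.ne')
  rw [sum_congr rfl fun c hc => by
      rw [wgt_of_ne (by simpa using hc), wgt_of_ne (by simpa using hc)],
    sum_compl_singleton_const]
  field_simp

theorem sum_prod_wgt (hK : 1 < K) {n : ℕ} (p : Fin n → ℝ) :
    ∑ φ : Fin n → Fin K, ∏ i, wgt K q (p i) (φ i) = 1 := by
  rw [← Fintype.prod_sum]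
  simp [sum_wgt hK]

theorem PA_eq_of_corr_iff_head (hK : 1 < K) {n : ℕ} (p : Fin (n + 1) → ℝ)
    (h : ∀ φ, corr q p φ ↔ φ 0 = q) : PA K q p = p 0 := by
  simp only [PA, h, sum_fin_succ_pi, Fin.prod_univ_succ, Fin.cons_zero, Fin.cons_succ]
  rw [Fintype.sum_eq_single q fun a ha => by simp [ha]]
  simp only [if_pos, mul_one, ← mul_sum, sum_prod_wgt hK, wgt_self]

theorem blf_eq_prod_odds {n : ℕ} (p : Fin n → ℝ) (φ : Fin n → Fin K) (d : Fin K) :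
    blf p φ d = ∏ i, if φ i = d then odds K (p i) else 1 := rfl

theorem corr_iff {n : ℕ} (p : Fin n → ℝ) (φ : Fin n → Fin K) :
    corr q p φ ↔ (∃ i, φ i = q) ∧ ∀ i, φ i ≠ q → blf p φ (φ i) < blf p φ q := by
  simp only [corr, forall_exists_index, forall_apply_eq_imp_iff]

theorem corr_fin_one_iff (p : Fin 1 → ℝ) (φ : Fin 1 → Fin K) : corr q p φ ↔ φ 0 = q := by
  simp only [corr_iff, Fin.exists_fin_one, Fin.forall_fin_one]
  exact ⟨And.left, fun h => ⟨h, fun h' => (h' h).elim⟩⟩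

theorem corr_pair_iff {p₁ p₂ : ℝ} (h : odds K p₂ < odds K p₁) (φ : Fin 2 → Fin K) :
    corr q ![p₁, p₂] φ ↔ φ 0 = q := by
  simp only [corr_iff, blf_eq_prod_odds, Fin.exists_fin_two, Fin.forall_fin_two,
    Fin.prod_univ_two, Matrix.cons_val_zero, Matrix.cons_val_one]
  by_cases h0 : φ 0 = q <;> by_cases h1 : φ 1 = q
  · simp [h0, h1]
  · simp [h0, h1, Ne.symm h1, h]
  · simp [h0, h1, Ne.symm h0, h.le]
  · simp [h0, h1]

theorem PA_singleton (hK : 1 < K) (p : ℝ) : PA K q ![p] = p :=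
  PA_eq_of_corr_iff_head hK ![p] (corr_fin_one_iff ![p])

theorem PA_pair (hK : 1 < K) {p₁ p₂ : ℝ} (h : odds K p₂ < odds K p₁) : PA K q ![p₁, p₂] = p₁ :=
  PA_eq_of_corr_iff_head hK ![p₁, p₂] (corr_pair_iff h)

theorem blf_triple (p₁ p₂ p₃ : ℝ) (a b c d : Fin K) :
    blf ![p₁, p₂, p₃] ![a, b, c] d = (if a = d then odds K p₁ else 1) *
      (if b = d then odds K p₂ else 1) * (if c = d then odds K p₃ else 1) := by
  simp only [blf_eq_prod_odds, Fin.prod_univ_three]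
  rfl

theorem corr_triple_iff {p₁ p₂ p₃ : ℝ} (h₂ : 0 < odds K p₂) (h₃ : 0 < odds K p₃)
    (h₂₁ : odds K p₂ < odds K p₁) (h₃₁ : odds K p₃ < odds K p₁)
    (h₁₂₃ : odds K p₁ < odds K p₂ * odds K p₃) (a b c : Fin K) :
    corr q ![p₁, p₂, p₃] ![a, b, c] ↔ a = q ∧ ¬(b = c ∧ b ≠ q) ∨ a ≠ q ∧ b = q ∧ c = q := by
  simp only [corr_iff, blf_triple, Fin.exists_fin_succ, Fin.forall_fin_succ,
    Matrix.cons_val_zero, Matrix.cons_val_succ, IsEmpty.exists_iff, IsEmpty.forall_iff, or_false]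
  generalize odds K p₁ = o₁ at *
  generalize odds K p₂ = o₂ at *
  generalize odds K p₃ = o₃ at *
  -- `o₂, o₃ > 1` since `o₂ o₃ > o₁ > o₂, o₃`, so `l₁` and either other model outvote the third
  have h₃₁₂ : o₃ < o₁ * o₂ := by nlinarith
  have h₂₁₃ : o₂ < o₁ * o₃ := by nlinarith
  by_cases ha : a = q <;> by_cases hb : b = q <;> by_cases hc : c = q <;>
    by_cases hab : a = b <;> by_cases hac : a = c <;> by_cases hbc : b = c
  all_goals simp_all [eq_comm] <;> intros <;> linarith

theorem sum_sum_wgt_mul_wgt_ite_eq_of_ne (hK : 1 < K) (p p' : ℝ) :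
    ∑ b, ∑ c, wgt K q p b * wgt K q p' c * (if b = c ∧ b ≠ q then 1 else 0) =
      (1 - p) * (1 - p') / ((K : ℝ) - 1) := by
  simp only [mul_ite, mul_one, mul_zero, ite_and, sum_ite_eq, mem_univ, if_true]
  rw [← sum_compl_wgt_mul_wgt hK, ← sum_filter]
  congr 1
  ext b
  simp

theorem sum_sum_wgt_mul_wgt_ite_eq_self (p p' : ℝ) :
    ∑ b, ∑ c, wgt K q p b * wgt K q p' c * (if b = q ∧ c = q then 1 else 0) = p * p' := by
  simp [ite_and, sum_ite_eq', wgt_self]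

theorem PA_triple (hK : 1 < K) {p₁ p₂ p₃ : ℝ} (h₂ : 0 < odds K p₂) (h₃ : 0 < odds K p₃)
    (h₂₁ : odds K p₂ < odds K p₁) (h₃₁ : odds K p₃ < odds K p₁)
    (h₁₂₃ : odds K p₁ < odds K p₂ * odds K p₃) :
    PA K q ![p₁, p₂, p₃] = p₁ - p₁ * (1 - p₂) * (1 - p₃) / ((K : ℝ) - 1) + (1 - p₁) * p₂ * p₃ := by
  have hcorr : ∀ a b c : Fin K, (if corr q ![p₁, p₂, p₃] ![a, b, c] then (1 : ℝ) else 0) =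
      if a = q then 1 - (if b = c ∧ b ≠ q then 1 else 0) else if b = q ∧ c = q then 1 else 0 := by
    intro a b c
    rw [corr_triple_iff h₂ h₃ h₂₁ h₃₁ h₁₂₃]
    split_ifs <;> simp_all
  have hsplit : PA K q ![p₁, p₂, p₃] = ∑ a, wgt K q p₁ a * if a = q
      then ∑ b, ∑ c, wgt K q p₂ b * wgt K q p₃ c * (1 - if b = c ∧ b ≠ q then 1 else 0)
      else ∑ b, ∑ c, wgt K q p₂ b * wgt K q p₃ c * (if b = q ∧ c = q then 1 else 0) := by
    simp only [PA, sum_fin_three_pi, Fin.prod_univ_three, hcorr]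
    refine sum_congr rfl fun a _ => ?_
    split_ifs <;> simp only [mul_sum, mul_assoc] <;> rfl
  have hfirst : ∑ b, ∑ c, wgt K q p₂ b * wgt K q p₃ c * (1 - if b = c ∧ b ≠ q then 1 else 0) =
      1 - (1 - p₂) * (1 - p₃) / ((K : ℝ) - 1) := by
    simp only [mul_sub, mul_one, sum_sub_distrib, ← sum_mul_sum, sum_wgt hK,
      sum_sum_wgt_mul_wgt_ite_eq_of_ne hK]
  rw [hsplit, Fintype.sum_eq_add_sum_compl q, if_pos rfl, hfirst, wgt_self,
    sum_congr rfl fun a ha => by rw [if_neg (by simpa using ha), sum_sum_wgt_mul_wgt_ite_eq_self],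
    ← sum_mul, sum_compl_wgt hK]
  ring

end

/-- The correctness probability function is not submodular: there exist `K ≥ 2` and
success probabilities `p₁, p₂, p₃ ∈ (0,1)` such that, with `S = {l₁}` and `T = {l₁, l₂}`,
`PA(S ∪ {l₃}) - PA(S) < PA(T ∪ {l₃}) - PA(T)`. -/
theorem PA_not_submodular :
    ∃ (K : ℕ) (p₁ p₂ p₃ : ℝ), 2 ≤ K ∧
      p₁ ∈ Set.Ioo (0 : ℝ) 1 ∧ p₂ ∈ Set.Ioo (0 : ℝ) 1 ∧ p₃ ∈ Set.Ioo (0 : ℝ) 1 ∧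
      ∀ q : Fin K,
        PA K q ![p₁, p₃] - PA K q ![p₁] < PA K q ![p₁, p₂, p₃] - PA K q ![p₁, p₂] := by
  have h₁ : odds 2 (3 / 4) = 3 := by norm_num [odds]
  have h₂ : odds 2 (2 / 3) = 2 := by norm_num [odds]
  refine ⟨2, 3 / 4, 2 / 3, 2 / 3, le_rfl, by norm_num, by norm_num, by norm_num, fun q => ?_⟩
  have h₂₁ : odds 2 (2 / 3) < odds 2 (3 / 4) := by norm_num [h₁, h₂]
  rw [PA_singleton one_lt_two, PA_pair one_lt_two h₂₁,
    PA_triple one_lt_two (by norm_num [h₂]) (by norm_num [h₂]) h₂₁ h₂₁ (by norm_num [h₁, h₂])]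
  norm_num
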